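/- arXiv:1108.1682 — 3 statements merged into one kernel-verified Lean document; each statement's English description precedes it below -/
import Mathlib

section
/- Let J be a finite index set, T > 0, and let x_i : [0,T] → ℝ^d for i ∈ J be differentiable curves that are pairwise non-colliding: x_i(t) ≠ x_j(t) for all i ≠ j and all t ∈ [0,T]. Let V ∈ C¹(ℝ^d; ℝ) and W ∈ C¹(ℝ^d; ℝ) with W(−ξ) = W(ξ) for all ξ, and suppose the dynamics x_i'(t) = ∇V(x_i(t)) + Σ_{j ∈ J, j ≠ i} ∇W(x_i(t) − x_j(t)) holds for all i and t. Then the entropy S(t) := Σ_{i ∈ J} ( V(x_i(t)) + ½ Σ_{j ∈ J, j ≠ i} W(x_i(t) − x_j(t)) ) satisfies dS/dt (t) = Σ_{i ∈ J} |x_i'(t)|² ≥ 0 for all t; in particular S is nondecreasing on [0,T]. -/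
/-!
Along the flow the particles move with velocity `v_i = ∂S/∂x_i`: the chain rule gives
`dS/dt = Σ_i ⟪∇V(x_i), x_i'⟫ + ½ Σ_{i ≠ j} ⟪∇W(x_i − x_j), x_i' − x_j'⟫`, and since `W` is even,
`∇W` is odd, so swapping `i` and `j` turns the pair sum into `Σ_i ⟪Σ_{j ≠ i} ∇W(x_i − x_j), x_i'⟫`.
Hence `dS/dt = Σ_i ⟪v_i, v_i⟫ ≥ 0`, and a nonnegative derivative makes `S` monotone.
-/

open Finset InnerProductSpace
open scoped RealInnerProductSpace

theorem Finset.sum_sum_erase_comm {ι β : Type*} [Fintype ι] [DecidableEq ι] [AddCommMonoid β]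
    (f : ι → ι → β) :
    ∑ i, ∑ j ∈ univ.erase i, f i j = ∑ i, ∑ j ∈ univ.erase i, f j i :=
  sum_comm' fun _ _ => by simp [ne_comm]

section

variable {E : Type*} [NormedAddCommGroup E] [InnerProductSpace ℝ E]

theorem sum_sum_erase_inner_sub_of_antisymm {ι : Type*} [Fintype ι] [DecidableEq ι]
    (F : ι → ι → E) (hF : ∀ i j, F j i = -F i j) (u : ι → E) :
    ∑ i, ∑ j ∈ univ.erase i, ⟪F i j, u i - u j⟫ = 2 * ∑ i, ⟪∑ j ∈ univ.erase i, F i j, u i⟫ := by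
  have hswap : ∑ i, ∑ j ∈ univ.erase i, ⟪F i j, u j⟫ = -∑ i, ∑ j ∈ univ.erase i, ⟪F i j, u i⟫ := by
    rw [sum_sum_erase_comm, ← sum_neg_distrib]
    exact sum_congr rfl fun i _ => by
      rw [← sum_neg_distrib]
      exact sum_congr rfl fun j _ => by rw [hF, inner_neg_left]
  simp only [inner_sub_right, sum_sub_distrib, hswap, sum_inner]
  ring

variable [CompleteSpace E]

theorem Function.Even.odd_gradient {f : E → ℝ} (hf : f.Even) : (gradient f).Odd := by
  intro x
  apply (toDual ℝ E).injective
  have hf_neg : (fun y => f ((-1 : ℝ) • y)) = f := funext fun y => by simp [hf y]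
  rw [map_neg, toDual_gradient, toDual_gradient]
  conv_rhs => rw [← hf_neg, fderiv_comp_smul]
  simp

theorem HasGradientAt.comp_hasDerivWithinAt {f : E → ℝ} {f' : E} {γ : ℝ → E} {γ' : E}
    {s : Set ℝ} {t : ℝ} (hf : HasGradientAt f f' (γ t)) (hγ : HasDerivWithinAt γ γ' s t) :
    HasDerivWithinAt (fun τ => f (γ τ)) ⟪f', γ'⟫ s t := by
  have h := hf.hasFDerivAt.comp_hasDerivWithinAt t hγ
  rwa [toDual_apply_apply] at h

noncomputable section ParticleSystem

variable {ι : Type*} [Fintype ι] [DecidableEq ι]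

def particleEntropy (V W : E → ℝ) (y : ι → E) : ℝ :=
  ∑ i, (V (y i) + (1 / 2) * ∑ j ∈ univ.erase i, W (y i - y j))

def particleVelocity (V W : E → ℝ) (y : ι → E) (i : ι) : E :=
  gradient V (y i) + ∑ j ∈ univ.erase i, gradient W (y i - y j)

theorem hasDerivWithinAt_particleEntropy {V W : E → ℝ} (hV : Differentiable ℝ V)
    (hW : Differentiable ℝ W) (hW_even : W.Even) {x : ι → ℝ → E} {x' : ι → E} {s : Set ℝ}
    {t : ℝ} (hx : ∀ i, HasDerivWithinAt (x i) (x' i) s t) :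
    HasDerivWithinAt (fun τ => particleEntropy V W fun i => x i τ)
      (∑ i, ⟪particleVelocity V W (fun j => x j t) i, x' i⟫) s t := by
  have hchain : HasDerivWithinAt (fun τ => particleEntropy V W fun i => x i τ)
      (∑ i, (⟪gradient V (x i t), x' i⟫ +
        (1 / 2) * ∑ j ∈ univ.erase i, ⟪gradient W (x i t - x j t), x' i - x' j⟫)) s t :=
    HasDerivWithinAt.fun_sum fun i _ =>
      ((hV _).hasGradientAt.comp_hasDerivWithinAt (hx i)).add <|
        (HasDerivWithinAt.fun_sum fun j _ =>
          (hW _).hasGradientAt.comp_hasDerivWithinAt ((hx i).sub (hx j))).const_mul _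
  convert hchain using 1
  rw [sum_add_distrib, ← mul_sum, sum_sum_erase_inner_sub_of_antisymm _
    (fun i j => by rw [← neg_sub, hW_even.odd_gradient]) x']
  simp only [particleVelocity, inner_add_left, sum_add_distrib]
  ring

end ParticleSystem

end

theorem entropy_inequality_discrete_measure_general {d : ℕ} {ι : Type*} [Fintype ι] [DecidableEq ι]
    (T : ℝ)
    (x : ι → ℝ → EuclideanSpace ℝ (Fin d))
    (V W : EuclideanSpace ℝ (Fin d) → ℝ)
    (hV : ContDiff ℝ 1 V) (hW : ContDiff ℝ 1 W)
    (hWsymm : ∀ ξ, W (-ξ) = W ξ)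
    (v : ι → ℝ → EuclideanSpace ℝ (Fin d))
    (hv : ∀ i t, v i t = gradient V (x i t) +
      ∑ j ∈ Finset.univ.erase i, gradient W (x i t - x j t))
    (hdyn : ∀ i, ∀ t ∈ Set.Icc (0:ℝ) T,
      HasDerivWithinAt (x i) (v i t) (Set.Icc (0:ℝ) T) t)
    (S : ℝ → ℝ)
    (hS : ∀ t, S t = ∑ i, (V (x i t) +
      (1/2) * ∑ j ∈ Finset.univ.erase i, W (x i t - x j t))) :
    (∀ t ∈ Set.Icc (0:ℝ) T,
        HasDerivWithinAt S (∑ i, ‖v i t‖ ^ 2) (Set.Icc (0:ℝ) T) t ∧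
        0 ≤ ∑ i, ‖v i t‖ ^ 2) ∧
      MonotoneOn S (Set.Icc (0:ℝ) T) := by
  have hderiv : ∀ t ∈ Set.Icc (0:ℝ) T,
      HasDerivWithinAt S (∑ i, ‖v i t‖ ^ 2) (Set.Icc (0:ℝ) T) t := by
    intro t ht
    have h := hasDerivWithinAt_particleEntropy (hV.differentiable one_ne_zero)
      (hW.differentiable one_ne_zero) hWsymm fun i => hdyn i t ht
    simp only [particleVelocity, ← hv, real_inner_self_eq_norm_sq] at h
    exact h.congr (fun τ _ => hS τ) (hS t)
  have hnonneg : ∀ t, 0 ≤ ∑ i, ‖v i t‖ ^ 2 := fun t => by positivity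
  refine ⟨fun t ht => ⟨hderiv t ht, hnonneg t⟩, ?_⟩
  exact monotoneOn_of_hasDerivWithinAt_nonneg (convex_Icc 0 T)
    (fun t ht => (hderiv t ht).continuousWithinAt)
    (fun t ht => (hderiv t (interior_subset ht)).mono interior_subset) fun t _ => hnonneg t

/-- **Entropy inequality for a discrete (microscopic) mass measure, continuous time.**
Finitely many pairwise non-colliding differentiable curves `x_i : [0,T] → ℝ^d` follow
the dynamics `x_i' = ∇V(x_i) + Σ_{j ≠ i} ∇W(x_i − x_j)` with `V, W ∈ C¹` and `W` even.
Then the entropy `S(t) = Σ_i ( V(x_i) + ½ Σ_{j ≠ i} W(x_i − x_j) )` satisfies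
`dS/dt = Σ_i |x_i'|² ≥ 0` on `[0,T]`; in particular `S` is nondecreasing on `[0,T]`. -/
theorem entropy_inequality_discrete_measure {d : ℕ} {ι : Type*} [Fintype ι] [DecidableEq ι]
    (T : ℝ) (hT : 0 < T)
    (x : ι → ℝ → EuclideanSpace ℝ (Fin d))
    (V W : EuclideanSpace ℝ (Fin d) → ℝ)
    (hV : ContDiff ℝ 1 V) (hW : ContDiff ℝ 1 W)
    (hWsymm : ∀ ξ, W (-ξ) = W ξ)
    (hnoncollide : ∀ t ∈ Set.Icc (0:ℝ) T, ∀ i j, i ≠ j → x i t ≠ x j t)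
    (v : ι → ℝ → EuclideanSpace ℝ (Fin d))
    (hv : ∀ i t, v i t = gradient V (x i t) +
      ∑ j ∈ Finset.univ.erase i, gradient W (x i t - x j t))
    (hdyn : ∀ i, ∀ t ∈ Set.Icc (0:ℝ) T,
      HasDerivWithinAt (x i) (v i t) (Set.Icc (0:ℝ) T) t)
    (S : ℝ → ℝ)
    (hS : ∀ t, S t = ∑ i, (V (x i t) +
      (1/2) * ∑ j ∈ Finset.univ.erase i, W (x i t - x j t))) :
    (∀ t ∈ Set.Icc (0:ℝ) T,
        HasDerivWithinAt S (∑ i, ‖v i t‖ ^ 2) (Set.Icc (0:ℝ) T) t ∧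
        0 ≤ ∑ i, ‖v i t‖ ^ 2) ∧
      MonotoneOn S (Set.Icc (0:ℝ) T) :=
  entropy_inequality_discrete_measure_general T x V W hV hW hWsymm v hv hdyn S hS
end

section
/- Let μ be a finite, compactly supported, nonnegative measure on ℝ^d that is absolutely continuous with respect to Lebesgue measure with bounded density. Let V, W ∈ C²(ℝ^d; ℝ) with W(−ξ) = W(ξ) for all ξ and with bounded first and second derivatives of V and W on a neighbourhood of the relevant supports. Define v(x) := ∇V(x) + (∇W ⋆ μ)(x), for Δt > 0 define the one-step motion mapping χ_Δt(x) := x + Δt·v(x) and the pushforward μ_Δt := χ_Δt#μ, and define the entropy S(Δt) := ∫ ( V + ½ W ⋆ μ_Δt ) dμ_Δt, with S(0) = ∫ ( V + ½ W ⋆ μ ) dμ. Then S(Δt) = S(0) + Δt ∫ |v|² dμ + O(Δt²) as Δt → 0⁺; in particular, up to O(Δt²)-terms, S(Δt) ≥ S(0) (discrete-in-time entropy inequality). -/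
/-!
Pulling the entropy back along `χ_Δt` gives
`S(Δt) = ∫ V(x + Δt v x) dμ + ½ ∬ W(x - y + Δt (v x - v y)) dμ dμ`.
Since `μ` has compact support, for `|Δt| ≤ 1` all Taylor segments stay in a compact set on which
the second derivatives of `V` and `W` are bounded, so second-order Taylor expansion yields
`S(Δt) = S(0) + Δt (∫ DV(x)(v x) dμ + ½ ∬ DW(x - y)(v x - v y) dμ dμ) + O(Δt²)`.
As `W` is even, `DW` is odd, and swapping `x` and `y` turns the double integral into
`2 ∬ DW(x - y)(v x)`; the first-order coefficient is thus `∫ ⟪∇V + ∇W ⋆ μ, v⟫ dμ = ∫ ‖v‖² dμ`.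
-/

open MeasureTheory Topology Asymptotics Filter Set InnerProductSpace
open scoped ENNReal

theorem norm_image_add_sub_sub_fderiv_le {E F : Type*} [NormedAddCommGroup E]
    [NormedSpace ℝ E] [NormedAddCommGroup F] [NormedSpace ℝ F] {f : E → F}
    (hf : ContDiff ℝ 2 f) {a h : E} {C : ℝ}
    (hC : ∀ z ∈ segment ℝ a (a + h), ‖fderiv ℝ (fderiv ℝ f) z‖ ≤ C) :
    ‖f (a + h) - f a - fderiv ℝ f a h‖ ≤ C * ‖h‖ ^ 2 := by
  have hC₀ : 0 ≤ C :=
    (norm_nonneg (fderiv ℝ (fderiv ℝ f) a)).trans (hC a (left_mem_segment ℝ a (a + h)))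
  have hdf : Differentiable ℝ (fderiv ℝ f) :=
    (hf.fderiv_right (m := 1) le_rfl).differentiable one_ne_zero
  have hf' : ∀ z ∈ segment ℝ a (a + h), ‖fderiv ℝ f z - fderiv ℝ f a‖ ≤ C * ‖h‖ := by
    intro z hz
    calc ‖fderiv ℝ f z - fderiv ℝ f a‖ ≤ C * ‖z - a‖ :=
          (convex_segment a (a + h)).norm_image_sub_le_of_norm_fderiv_le
            (fun w _ => hdf w) hC (left_mem_segment ℝ a (a + h)) hz
      _ ≤ C * ‖h‖ := by
          gcongr
          simpa using norm_sub_le_of_mem_segment hz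
  calc ‖f (a + h) - f a - fderiv ℝ f a h‖ ≤ C * ‖h‖ * ‖a + h - a‖ := by
        simpa using (convex_segment a (a + h)).norm_image_sub_le_of_norm_fderiv_le'
          (fun z _ => (hf.differentiable two_ne_zero).differentiableAt) hf'
          (left_mem_segment ℝ a (a + h)) (right_mem_segment ℝ a (a + h))
    _ = C * ‖h‖ ^ 2 := by rw [add_sub_cancel_left]; ring

theorem Function.Even.fderiv {E F : Type*} [NormedAddCommGroup E] [NormedSpace ℝ E]
    [NormedAddCommGroup F] [NormedSpace ℝ F] {f : E → F} (hf : Function.Even f) :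
    Function.Odd (fderiv ℝ f) := by
  intro ξ
  have hcomp : f ∘ ContinuousLinearEquiv.neg ℝ = f := funext hf
  have hchain := (ContinuousLinearEquiv.neg ℝ (M := E)).comp_right_fderiv (f := f) (x := -ξ)
  rw [hcomp] at hchain
  rw [hchain]
  ext u
  simp

theorem continuous_gradient {E : Type*} [NormedAddCommGroup E] [InnerProductSpace ℝ E]
    [CompleteSpace E] {f : E → ℝ} {n : WithTop ℕ∞} (hf : ContDiff ℝ n f) (hn : n ≠ 0) :
    Continuous (gradient f) :=
  (toDual ℝ E).symm.continuous.comp (hf.continuous_fderiv hn)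

section CompactSupport

theorem MeasureTheory.ae_mem_prod {α β : Type*} [MeasurableSpace α] [MeasurableSpace β]
    {ν : Measure α} {ρ : Measure β} {K : Set α} {L : Set β} (hνK : ∀ᵐ x ∂ν, x ∈ K)
    (hρL : ∀ᵐ y ∂ρ, y ∈ L) : ∀ᵐ p ∂ν.prod ρ, p ∈ K ×ˢ L :=
  (Measure.quasiMeasurePreserving_fst.ae hνK).and (Measure.quasiMeasurePreserving_snd.ae hρL)

theorem continuous_integral_of_ae_mem_isCompact {X Y F : Type*} [TopologicalSpace X]
    [FirstCountableTopology X] [LocallyCompactSpace X] [TopologicalSpace Y] [MeasurableSpace Y]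
    [OpensMeasurableSpace Y] [NormedAddCommGroup F] [NormedSpace ℝ F]
    [SecondCountableTopologyEither Y F] {ν : Measure Y} [IsLocallyFiniteMeasure ν] {K : Set Y}
    (hK : IsCompact K) (hνK : ∀ᵐ y ∂ν, y ∈ K) {f : X → Y → F} (hf : Continuous f.uncurry) :
    Continuous fun x => ∫ y, f x y ∂ν := by
  rw [← Measure.restrict_eq_self_of_ae_mem hνK]
  exact continuous_parametric_integral_of_continuous hf hK

variable {α : Type*} [MeasurableSpace α] [TopologicalSpace α] [OpensMeasurableSpace α]
  [T2Space α] {ν : Measure α} [IsFiniteMeasure ν] {K : Set α}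

theorem Continuous.integrable_of_ae_mem_isCompact {F : Type*} [NormedAddCommGroup F]
    (hK : IsCompact K) (hνK : ∀ᵐ x ∂ν, x ∈ K) {f : α → F} (hf : Continuous f) :
    Integrable f ν := by
  rw [← Measure.restrict_eq_self_of_ae_mem hνK]
  exact hf.continuousOn.integrableOn_compact hK

theorem isBigO_integral_taylor_remainder {E : Type*} [NormedAddCommGroup E] [NormedSpace ℝ E]
    (hK : IsCompact K) (hνK : ∀ᵐ x ∂ν, x ∈ K) {f : E → ℝ} (hf : ContDiff ℝ 2 f)
    {a h : α → E} (ha : Continuous a) (hh : Continuous h) :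
    (fun t : ℝ => ∫ x, f (a x + t • h x) ∂ν - ∫ x, f (a x) ∂ν
      - t * ∫ x, fderiv ℝ f (a x) (h x) ∂ν) =O[𝓝 0] fun t => t ^ 2 := by
  set L := (fun q : α × ℝ => a q.1 + q.2 • h q.1) '' (K ×ˢ Icc (-1) 1)
  have hL : IsCompact L := (hK.prod isCompact_Icc).image (by fun_prop)
  obtain ⟨C, hC⟩ := hL.exists_bound_of_continuousOn
    ((hf.fderiv_right (m := 1) le_rfl).continuous_fderiv one_ne_zero).continuousOn
  obtain ⟨B, hB⟩ := hK.exists_bound_of_continuousOn hh.continuousOn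
  have hseg : ∀ x ∈ K, ∀ t : ℝ, |t| ≤ 1 → segment ℝ (a x) (a x + t • h x) ⊆ L := by
    intro x hx t ht
    rw [segment_eq_image']
    rintro _ ⟨θ, ⟨hθ₀, hθ₁⟩, rfl⟩
    refine ⟨(x, θ * t), ⟨hx, ?_⟩, by simp [smul_smul]⟩
    rw [Set.mem_Icc, ← abs_le, abs_mul, abs_of_nonneg hθ₀]
    nlinarith [abs_nonneg t]
  have hpoint : ∀ x ∈ K, ∀ t : ℝ, |t| ≤ 1 →
      ‖f (a x + t • h x) - f (a x) - t * fderiv ℝ f (a x) (h x)‖ ≤ C * B ^ 2 * t ^ 2 := by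
    intro x hx t ht
    have hC₀ : 0 ≤ C := (norm_nonneg (fderiv ℝ (fderiv ℝ f) (a x))).trans
      (hC _ ⟨(x, 0), ⟨hx, by norm_num⟩, by simp⟩)
    calc ‖f (a x + t • h x) - f (a x) - t * fderiv ℝ f (a x) (h x)‖
        ≤ C * ‖t • h x‖ ^ 2 := by
          simpa using norm_image_add_sub_sub_fderiv_le hf fun z hz => hC z (hseg x hx t ht hz)
      _ ≤ C * B ^ 2 * t ^ 2 := by
          rw [norm_smul, mul_pow, Real.norm_eq_abs, sq_abs, mul_comm (t ^ 2), ← mul_assoc]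
          gcongr
          exact hB x hx
  have hint : ∀ {g : α → ℝ}, Continuous g → Integrable g ν :=
    fun hg => hg.integrable_of_ae_mem_isCompact hK hνK
  have hdf : Continuous fun x => fderiv ℝ f (a x) (h x) :=
    ((hf.continuous_fderiv two_ne_zero).comp ha).clm_apply hh
  refine IsBigO.of_bound (C * B ^ 2 * ν.real univ) ?_
  filter_upwards [Metric.closedBall_mem_nhds (0 : ℝ) one_pos] with t ht
  rw [Metric.mem_closedBall, Real.dist_0_eq_abs] at ht
  rw [← integral_sub (hint (g := fun x => f (a x + t • h x)) (by fun_prop))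
      (hint (g := fun x => f (a x)) (by fun_prop)),
    ← integral_const_mul, ← integral_sub (hint (by fun_prop)) (hint (by fun_prop)),
    Real.norm_of_nonneg (sq_nonneg t)]
  calc _ ≤ C * B ^ 2 * t ^ 2 * ν.real univ :=
        norm_integral_le_of_norm_le_const (hνK.mono fun x hx => hpoint x hx t ht)
    _ = _ := by ring

end CompactSupport

theorem integral_prod_odd_apply_sub {α F : Type*} [MeasurableSpace α] [AddGroup α]
    [NormedAddCommGroup F] [NormedSpace ℝ F] {ν : Measure α} [SFinite ν]
    {g : α → F →L[ℝ] ℝ} (hg : Function.Odd g) {u : α → F}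
    (hint : Integrable (fun p : α × α => g (p.1 - p.2) (u p.1)) (ν.prod ν)) :
    ∫ p, g (p.1 - p.2) (u p.1 - u p.2) ∂ν.prod ν
      = 2 * ∫ p, g (p.1 - p.2) (u p.1) ∂ν.prod ν := by
  have hsplit : ∀ p : α × α,
      g (p.1 - p.2) (u p.1 - u p.2) = g (p.1 - p.2) (u p.1) + g (p.2 - p.1) (u p.2) := by
    intro p
    rw [← neg_sub p.1 p.2, hg, map_sub, neg_apply, sub_eq_add_neg]
  have hint_swap : Integrable (fun p : α × α => g (p.2 - p.1) (u p.2)) (ν.prod ν) := hint.swap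
  simp_rw [hsplit]
  rw [integral_add hint hint_swap, two_mul]
  congr 1
  exact integral_prod_swap fun p : α × α => g (p.1 - p.2) (u p.1)

section Entropy

variable {E : Type*} [NormedAddCommGroup E] [InnerProductSpace ℝ E] [FiniteDimensional ℝ E]
  [MeasurableSpace E] [BorelSpace E]

noncomputable def velocity (V W : E → ℝ) (μ : Measure E) (x : E) : E :=
  gradient V x + ∫ y, gradient W (x - y) ∂μ

noncomputable def entropy (V W : E → ℝ) (μ : Measure E) : ℝ :=
  ∫ x, (V x + (1 / 2) * ∫ y, W (x - y) ∂μ) ∂μ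

variable {μ : Measure E} [IsFiniteMeasure μ] {K : Set E} {V W : E → ℝ}

theorem continuous_velocity (hK : IsCompact K) (hμK : ∀ᵐ x ∂μ, x ∈ K)
    (hV : ContDiff ℝ 1 V) (hW : ContDiff ℝ 1 W) : Continuous (velocity V W μ) :=
  (continuous_gradient hV one_ne_zero).add <| continuous_integral_of_ae_mem_isCompact hK hμK
    ((continuous_gradient hW one_ne_zero).comp (continuous_fst.sub continuous_snd))

theorem norm_velocity_sq (hK : IsCompact K) (hμK : ∀ᵐ x ∂μ, x ∈ K) (hW : ContDiff ℝ 1 W)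
    (x : E) : ‖velocity V W μ x‖ ^ 2 = fderiv ℝ V x (velocity V W μ x)
      + ∫ y, fderiv ℝ W (x - y) (velocity V W μ x) ∂μ := by
  have hint : Integrable (fun y => gradient W (x - y)) μ :=
    ((continuous_gradient hW one_ne_zero).comp (by fun_prop)).integrable_of_ae_mem_isCompact
      hK hμK
  rw [← real_inner_self_eq_norm_sq]
  nth_rw 1 [velocity]
  rw [inner_add_left, inner_gradient_left, real_inner_comm, ← integral_inner hint]
  congr 1
  refine integral_congr_ae (Eventually.of_forall fun y => ?_)
  dsimp only
  rw [real_inner_comm, inner_gradient_left]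

theorem integral_norm_velocity_sq (hK : IsCompact K) (hμK : ∀ᵐ x ∂μ, x ∈ K)
    (hV : ContDiff ℝ 1 V) (hW : ContDiff ℝ 1 W) (hWeven : Function.Even W) :
    ∫ x, ‖velocity V W μ x‖ ^ 2 ∂μ = ∫ x, fderiv ℝ V x (velocity V W μ x) ∂μ
      + (1 / 2) * ∫ p, fderiv ℝ W (p.1 - p.2) (velocity V W μ p.1 - velocity V W μ p.2)
        ∂μ.prod μ := by
  have hv := continuous_velocity hK hμK hV hW
  have hint : Integrable (fun p : E × E => fderiv ℝ W (p.1 - p.2) (velocity V W μ p.1))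
      (μ.prod μ) :=
    Continuous.integrable_of_ae_mem_isCompact (hK.prod hK) (ae_mem_prod hμK hμK) (by fun_prop)
  rw [integral_prod_odd_apply_sub hWeven.fderiv hint, integral_prod _ hint, one_div,
    inv_mul_cancel_left₀ two_ne_zero,
    ← integral_add (Continuous.integrable_of_ae_mem_isCompact hK hμK (by fun_prop))
      hint.integral_prod_left]
  exact integral_congr_ae (Eventually.of_forall (norm_velocity_sq hK hμK hW))

theorem entropy_map (hK : IsCompact K) (hμK : ∀ᵐ x ∂μ, x ∈ K) (hV : Continuous V)
    (hW : Continuous W) {χ : E → E} (hχ : Continuous χ) :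
    entropy V W (μ.map χ)
      = ∫ x, V (χ x) ∂μ + (1 / 2) * ∫ p, W (χ p.1 - χ p.2) ∂μ.prod μ := by
  have hpush : ∀ x, ∫ y, W (x - y) ∂μ.map χ = ∫ y, W (x - χ y) ∂μ := fun x =>
    integral_map hχ.aemeasurable (hW.comp (continuous_sub_left x)).aestronglyMeasurable
  have hconv : Continuous fun x => ∫ y, W (x - χ y) ∂μ :=
    continuous_integral_of_ae_mem_isCompact hK hμK (f := fun x y => W (x - χ y)) (by fun_prop)
  have hint : Integrable (fun p : E × E => W (χ p.1 - χ p.2)) (μ.prod μ) :=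
    Continuous.integrable_of_ae_mem_isCompact (hK.prod hK) (ae_mem_prod hμK hμK) (by fun_prop)
  rw [entropy]
  simp_rw [hpush]
  have hintegrand : Continuous fun x => V x + (1 / 2) * ∫ y, W (x - χ y) ∂μ := by fun_prop
  rw [integral_map hχ.aemeasurable hintegrand.aestronglyMeasurable,
    integral_add (Continuous.integrable_of_ae_mem_isCompact hK hμK (by fun_prop))
      (hint.integral_prod_left.const_mul (1 / 2)), integral_const_mul, integral_prod _ hint]

end Entropy

theorem discrete_time_entropy_inequality_general {d : ℕ}
    (μ : Measure (EuclideanSpace ℝ (Fin d))) [IsFiniteMeasure μ]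
    (K : Set (EuclideanSpace ℝ (Fin d))) (hK : IsCompact K) (hμK : μ Kᶜ = 0)
    (V W : EuclideanSpace ℝ (Fin d) → ℝ)
    (hV : ContDiff ℝ 2 V) (hW : ContDiff ℝ 2 W)
    (hWsymm : ∀ ξ, W (-ξ) = W ξ)
    (v : EuclideanSpace ℝ (Fin d) → EuclideanSpace ℝ (Fin d))
    (hv : ∀ x, v x = gradient V x + ∫ y, gradient W (x - y) ∂μ)
    (χ : ℝ → EuclideanSpace ℝ (Fin d) → EuclideanSpace ℝ (Fin d))
    (hχ : ∀ Δt x, χ Δt x = x + Δt • v x)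
    (S : ℝ → ℝ)
    (hS : ∀ Δt, S Δt = ∫ x, (V x + (1/2) * ∫ y, W (x - y) ∂(Measure.map (χ Δt) μ))
      ∂(Measure.map (χ Δt) μ)) :
    (fun Δt => S Δt - S 0 - Δt * ∫ x, ‖v x‖ ^ 2 ∂μ)
      =O[𝓝[>] (0:ℝ)] fun Δt => Δt ^ 2 := by
  have hμK' : ∀ᵐ x ∂μ, x ∈ K := hμK
  have hV₁ : ContDiff ℝ 1 V := hV.of_le (by norm_num)
  have hW₁ : ContDiff ℝ 1 W := hW.of_le (by norm_num)
  obtain rfl : v = velocity V W μ := funext hv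
  have hv := continuous_velocity hK hμK' hV₁ hW₁
  have hS_eq : ∀ t, S t = ∫ x, V (x + t • velocity V W μ x) ∂μ + (1 / 2) *
      ∫ p, W ((p.1 - p.2) + t • (velocity V W μ p.1 - velocity V W μ p.2)) ∂μ.prod μ := by
    intro t
    rw [hS, ← entropy, funext (hχ t), entropy_map hK hμK' hV.continuous hW.continuous
      (by fun_prop)]
    congr 3 with p
    rw [smul_sub]
    abel_nf
  have hTaylorV := isBigO_integral_taylor_remainder hK hμK' hV continuous_id hv
  have hTaylorW := isBigO_integral_taylor_remainder (hK.prod hK) (ae_mem_prod hμK' hμK') hW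
    (a := fun p => p.1 - p.2) (h := fun p => velocity V W μ p.1 - velocity V W μ p.2)
    (by fun_prop) (by fun_prop)
  refine ((hTaylorV.add (hTaylorW.const_mul_left (1 / 2))).mono nhdsWithin_le_nhds).congr_left
    fun t => ?_
  rw [hS_eq, hS_eq 0, integral_norm_velocity_sq hK hμK' hV₁ hW₁ hWsymm]
  simp only [zero_smul, add_zero, id]
  ring

/-- **Theorem 4.30 (discrete-in-time entropy inequality, one population).**
Let `μ` be a finite nonnegative measure on `ℝ^d` with compact support, absolutely
continuous with respect to Lebesgue measure with bounded density.  Let `V, W ∈ C²`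
with `W` even and with bounded first and second derivatives.  With
`v = ∇V + ∇W ⋆ μ`, the explicit-Euler motion mapping `χ_Δt(x) = x + Δt·v(x)`, the
pushforward `μ_Δt = χ_Δt#μ`, and the entropy `S(Δt) = ∫ (V + ½ W ⋆ μ_Δt) dμ_Δt`,
one has `S(Δt) = S(0) + Δt ∫ |v|² dμ + O(Δt²)` as `Δt → 0⁺`; in particular, up to
`O(Δt²)`-terms, `S(Δt) ≥ S(0)`. -/
theorem discrete_time_entropy_inequality {d : ℕ}
    (μ : Measure (EuclideanSpace ℝ (Fin d))) [IsFiniteMeasure μ]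
    (K : Set (EuclideanSpace ℝ (Fin d))) (hK : IsCompact K) (hμK : μ Kᶜ = 0)
    (hac : μ ≪ volume)
    (hbd : ∃ C : ℝ≥0∞, C ≠ ⊤ ∧ ∀ s, μ s ≤ C * volume s)
    (V W : EuclideanSpace ℝ (Fin d) → ℝ)
    (hV : ContDiff ℝ 2 V) (hW : ContDiff ℝ 2 W)
    (hWsymm : ∀ ξ, W (-ξ) = W ξ)
    (hVbd : ∃ C : ℝ, ∀ x, ‖fderiv ℝ V x‖ ≤ C ∧ ‖fderiv ℝ (fderiv ℝ V) x‖ ≤ C)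
    (hWbd : ∃ C : ℝ, ∀ x, ‖fderiv ℝ W x‖ ≤ C ∧ ‖fderiv ℝ (fderiv ℝ W) x‖ ≤ C)
    (v : EuclideanSpace ℝ (Fin d) → EuclideanSpace ℝ (Fin d))
    (hv : ∀ x, v x = gradient V x + ∫ y, gradient W (x - y) ∂μ)
    (χ : ℝ → EuclideanSpace ℝ (Fin d) → EuclideanSpace ℝ (Fin d))
    (hχ : ∀ Δt x, χ Δt x = x + Δt • v x)
    (S : ℝ → ℝ)
    (hS : ∀ Δt, S Δt = ∫ x, (V x + (1/2) * ∫ y, W (x - y) ∂(Measure.map (χ Δt) μ))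
      ∂(Measure.map (χ Δt) μ)) :
    (fun Δt => S Δt - S 0 - Δt * ∫ x, ‖v x‖ ^ 2 ∂μ)
      =O[𝓝[>] (0:ℝ)] fun Δt => Δt ^ 2 :=
  discrete_time_entropy_inequality_general μ K hK hμK V W hV hW hWsymm v hv χ hχ S hS
end

section
/- Let ν ∈ ℕ and for α ∈ {1,…,ν} let μ^α be finite, compactly supported, nonnegative measures on ℝ^d that are absolutely continuous with respect to Lebesgue measure with bounded densities. Let V^α ∈ C²(ℝ^d; ℝ), and for α, β ∈ {1,…,ν} let W^α_β ∈ C²(ℝ^d; ℝ) with bounded first and second derivatives, satisfying W^α_β(−ξ) = W^α_β(ξ) for all ξ and the symmetric-interaction condition W^α_β = W^β_α. Define v^α(x) := ∇V^α(x) + Σ_{β=1}^{ν} (∇W^α_β ⋆ μ^β)(x), for Δt > 0 set χ^α_Δt(x) := x + Δt·v^α(x) and μ^α_Δt := χ^α_Δt#μ^α, and define the entropy S(Δt) := Σ_{α=1}^{ν} ∫ ( V^α + ½ Σ_{β=1}^{ν} W^α_β ⋆ μ^β_Δt ) dμ^α_Δt. Then S(Δt) = S(0) + Δt Σ_{α=1}^{ν}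 ∫ |v^α|² dμ^α + O(Δt²) as Δt → 0⁺; in particular, up to O(Δt²)-terms, S(Δt) ≥ S(0). -/
/-!
Pulling the pushforwards back gives
`S(Δt) = Σ_α ∫ V^α(x + Δt v^α x) dμ^α`
`      + ½ Σ_{α,β} ∬ W^α_β(x - y + Δt (v^α x - v^β y)) dμ^α(x) dμ^β(y)`.
Because the measures are compactly supported and `v^α` is continuous, for `|Δt| ≤ 1` all the
Taylor segments stay in a fixed compact set, so the second-order remainder of each term is
`O(Δt²)`. The first-order coefficient is
`Σ_α ∫ ⟪∇V^α, v^α⟫ dμ^α + ½ Σ_{α,β} ∬ ⟪∇W^α_β(x - y), v^α x - v^β y⟫`; since `∇W^α_β` is odd and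
`W^α_β = W^β_α`, exchanging `(α, x) ↔ (β, y)` shows that the double sum equals
`2 Σ_{α,β} ∬ ⟪∇W^α_β(x - y), v^α x⟫`, and the whole coefficient collapses to
`Σ_α ∫ ⟪v^α, v^α⟫ dμ^α`.
-/

open MeasureTheory Topology Asymptotics
open scoped ENNReal RealInnerProductSpace

theorem MeasureTheory.Measure.prod_compl_prod_eq_zero {X Y : Type*} [MeasurableSpace X]
    [MeasurableSpace Y] {μ : Measure X} {ν : Measure Y} [SFinite ν] {K : Set X} {L : Set Y}
    (hμK : μ Kᶜ = 0) (hνL : ν Lᶜ = 0) : μ.prod ν (K ×ˢ L)ᶜ = 0 := by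
  rw [Set.compl_prod_eq_union, measure_union_null_iff, Measure.prod_prod, Measure.prod_prod,
    hμK, hνL]
  simp

section CompactSupport

variable {X F : Type*} [MeasurableSpace X] [TopologicalSpace X] [NormedAddCommGroup F]
  {μ : Measure X} {K : Set X}

theorem Continuous.integrable_of_measure_compl_eq_zero [OpensMeasurableSpace X] [T2Space X]
    [IsFiniteMeasure μ] {g : X → F} (hg : Continuous g) (hK : IsCompact K) (hμK : μ Kᶜ = 0) :
    Integrable g μ := by
  rw [← Measure.restrict_eq_self_of_ae_mem (ae_iff.2 hμK)]
  exact hg.continuousOn.integrableOn_compact hK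

theorem continuous_integral_of_measure_compl_eq_zero [OpensMeasurableSpace X] [IsFiniteMeasure μ]
    {Y : Type*} [TopologicalSpace Y] [FirstCountableTopology Y] [LocallyCompactSpace Y]
    [NormedSpace ℝ F] [SecondCountableTopologyEither X F] {H : Y → X → F}
    (hH : Continuous H.uncurry) (hK : IsCompact K) (hμK : μ Kᶜ = 0) :
    Continuous fun y => ∫ x, H y x ∂μ := by
  rw [← Measure.restrict_eq_self_of_ae_mem (ae_iff.2 hμK)]
  exact continuous_parametric_integral_of_continuous hH hK

end CompactSupport

section Taylor

variable {E F : Type*} [NormedAddCommGroup E] [NormedSpace ℝ E] [NormedAddCommGroup F]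
  [NormedSpace ℝ F] {f : E → F}

theorem norm_sub_sub_fderiv_le_of_norm_fderiv_fderiv_le (hf : ContDiff ℝ 2 f) {a h : E} {C : ℝ}
    (hC : ∀ z ∈ segment ℝ a (a + h), ‖fderiv ℝ (fderiv ℝ f) z‖ ≤ C) :
    ‖f (a + h) - f a - fderiv ℝ f a h‖ ≤ C * ‖h‖ ^ 2 := by
  have hf' : Differentiable ℝ (fderiv ℝ f) :=
    (hf.fderiv_right (m := 1) le_rfl).differentiable one_ne_zero
  have ha : a ∈ segment ℝ a (a + h) := left_mem_segment ℝ a (a + h)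
  have hlin : ∀ z ∈ segment ℝ a (a + h), ‖fderiv ℝ f z - fderiv ℝ f a‖ ≤ C * ‖h‖ := by
    intro z hz
    have hza : ‖z - a‖ ≤ ‖h‖ := by
      simpa [dist_eq_norm] using segment_subset_closedBall_left a (a + h) hz
    have hC0 : 0 ≤ C := (norm_nonneg (fderiv ℝ (fderiv ℝ f) a)).trans (hC a ha)
    calc ‖fderiv ℝ f z - fderiv ℝ f a‖ ≤ C * ‖z - a‖ :=
          (convex_segment a (a + h)).norm_image_sub_le_of_norm_fderiv_le
            (fun z _ => hf'.differentiableAt) hC ha hz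
      _ ≤ C * ‖h‖ := by gcongr
  have := (convex_segment a (a + h)).norm_image_sub_le_of_norm_fderiv_le'
    (fun z _ => (hf.differentiable two_ne_zero).differentiableAt) hlin ha
    (right_mem_segment ℝ a (a + h))
  simpa [pow_two, mul_assoc] using this

theorem isBigO_integral_sub_sub_integral_fderiv {X : Type*} [MeasurableSpace X]
    [TopologicalSpace X] [OpensMeasurableSpace X] [T2Space X] {ρ : Measure X} [IsFiniteMeasure ρ]
    {K : Set X} (hK : IsCompact K) (hρK : ρ Kᶜ = 0) (hf : ContDiff ℝ 2 f) {φ w : X → E}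
    (hφ : Continuous φ) (hw : Continuous w) :
    (fun t : ℝ => ∫ p, f (φ p + t • w p) ∂ρ - ∫ p, f (φ p) ∂ρ
        - t • ∫ p, fderiv ℝ f (φ p) (w p) ∂ρ) =O[𝓝 0] fun t => t ^ 2 := by
  -- for `|t| ≤ 1` all segments `[φ p, φ p + t • w p]`, `p ∈ K`, lie in the compact set `L`
  set L := (fun q : X × ℝ => φ q.1 + q.2 • w q.1) '' (K ×ˢ Set.Icc (-1) 1)
  have hL : IsCompact L := (hK.prod isCompact_Icc).image (by fun_prop)
  obtain ⟨C, hC⟩ := hL.exists_bound_of_continuousOn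
    ((hf.fderiv_right (m := 1) le_rfl).continuous_fderiv one_ne_zero).continuousOn
  obtain ⟨M, hM⟩ := hK.exists_bound_of_continuousOn hw.continuousOn
  have hpt : ∀ t ∈ Set.Icc (-1 : ℝ) 1, ∀ p ∈ K,
      ‖f (φ p + t • w p) - f (φ p) - t • fderiv ℝ f (φ p) (w p)‖ ≤ C * M ^ 2 * t ^ 2 := by
    intro t ht p hp
    have hseg : ∀ z ∈ segment ℝ (φ p) (φ p + t • w p), ‖fderiv ℝ (fderiv ℝ f) z‖ ≤ C := by
      rw [segment_eq_image']
      rintro _ ⟨θ, ⟨hθ0, hθ1⟩, rfl⟩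
      refine hC _ ⟨(p, θ * t), ⟨hp, ?_⟩, by simp [mul_smul]⟩
      obtain ⟨ht0, ht1⟩ := ht
      constructor <;> nlinarith
    have hC0 : 0 ≤ C :=
      (norm_nonneg (fderiv ℝ (fderiv ℝ f) (φ p))).trans (hseg _ (left_mem_segment ℝ _ _))
    rw [← map_smul]
    calc _ ≤ C * ‖t • w p‖ ^ 2 := norm_sub_sub_fderiv_le_of_norm_fderiv_fderiv_le hf hseg
      _ = C * ‖w p‖ ^ 2 * t ^ 2 := by rw [norm_smul, Real.norm_eq_abs, mul_pow, sq_abs]; ring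
      _ ≤ C * M ^ 2 * t ^ 2 := by gcongr; exact hM p hp
  have hf0 : Continuous f := hf.continuous
  have hf1 : Continuous (fderiv ℝ f) := hf.continuous_fderiv two_ne_zero
  have hint : ∀ {g : X → F}, Continuous g → Integrable g ρ := fun hg =>
    hg.integrable_of_measure_compl_eq_zero hK hρK
  refine IsBigO.of_bound (C * M ^ 2 * ρ.real Set.univ) ?_
  filter_upwards [Icc_mem_nhds (show (-1 : ℝ) < 0 by norm_num) one_pos] with t ht
  rw [← integral_smul, ← integral_sub (hint (by fun_prop)) (hint (by fun_prop)),
    ← integral_sub (hint (by fun_prop)) (hint (by fun_prop))]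
  refine (norm_integral_le_of_norm_le_const (C := C * M ^ 2 * t ^ 2) ?_).trans_eq
    (by rw [Real.norm_of_nonneg (sq_nonneg t)]; ring)
  filter_upwards [ae_iff.2 hρK] with p hp
  exact hpt t ht p hp

end Taylor

section Gradient

variable {E : Type*} [NormedAddCommGroup E] [InnerProductSpace ℝ E] [CompleteSpace E]
  {f : E → ℝ}

theorem ContDiff.continuous_gradient (hf : ContDiff ℝ 1 f) : Continuous (gradient f) :=
  (InnerProductSpace.toDual ℝ E).symm.continuous.comp (hf.continuous_fderiv one_ne_zero)

theorem gradient_neg_of_even (hf : ∀ x, f (-x) = f x) (x : E) :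
    gradient f (-x) = -gradient f x := by
  have h := (ContinuousLinearEquiv.neg ℝ (M := E)).comp_right_fderiv (f := f) (x := x)
  rw [show f ∘ ContinuousLinearEquiv.neg ℝ = f from funext hf] at h
  have h' : fderiv ℝ f (-x) = -fderiv ℝ f x := by
    ext u
    simpa using congrArg (fun L : E →L[ℝ] ℝ => L (-u)) h.symm
  rw [gradient, gradient, h', map_neg]

end Gradient

section Crowd

variable {E : Type*} [NormedAddCommGroup E] [InnerProductSpace ℝ E] [FiniteDimensional ℝ E]
  [MeasurableSpace E] [BorelSpace E] {ι : Type*} [Fintype ι]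

theorem integral_prod_inner_eq_integral_inner_integral {μ ν : Measure E} [IsFiniteMeasure μ]
    [IsFiniteMeasure ν] {K L : Set E} (hK : IsCompact K) (hμK : μ Kᶜ = 0) (hL : IsCompact L)
    (hνL : ν Lᶜ = 0) {H : E → E → E} (hH : Continuous H.uncurry) {g : E → E}
    (hg : Continuous g) :
    ∫ p, ⟪H p.1 p.2, g p.1⟫ ∂μ.prod ν = ∫ x, ⟪∫ y, H x y ∂ν, g x⟫ ∂μ := by
  have hprod : Integrable (fun p : E × E => ⟪H p.1 p.2, g p.1⟫) (μ.prod ν) :=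
    Continuous.integrable_of_measure_compl_eq_zero (by fun_prop) (hK.prod hL)
      (Measure.prod_compl_prod_eq_zero hμK hνL)
  rw [integral_prod _ hprod]
  congr 1 with x
  have hHx : Integrable (H x) ν :=
    Continuous.integrable_of_measure_compl_eq_zero (by fun_prop) hL hνL
  simp_rw [real_inner_comm (g x)]
  exact integral_inner hHx (g x)

theorem continuous_add_sum_integral_comp_sub {μ : ι → Measure E} [∀ β, IsFiniteMeasure (μ β)]
    {K : ι → Set E} (hK : ∀ β, IsCompact (K β)) (hμK : ∀ β, μ β (K β)ᶜ = 0) {g : E → E}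
    (hg : Continuous g) {G : ι → E → E} (hG : ∀ β, Continuous (G β)) :
    Continuous fun x => g x + ∑ β, ∫ y, G β (x - y) ∂μ β :=
  hg.add <| continuous_finsetSum _ fun β _ =>
    continuous_integral_of_measure_compl_eq_zero (H := fun x y => G β (x - y)) (by fun_prop)
      (hK β) (hμK β)

theorem sum_integral_inner_add_half_sum_integral_prod_eq_sum_integral_norm_sq
    {μ : ι → Measure E} [∀ α, IsFiniteMeasure (μ α)] {K : ι → Set E}
    (hK : ∀ α, IsCompact (K α)) (hμK : ∀ α, μ α (K α)ᶜ = 0) {g : ι → E → E}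
    (hg : ∀ α, Continuous (g α)) {G : ι → ι → E → E} (hG : ∀ α β, Continuous (G α β))
    (hGodd : ∀ α β ξ, G α β (-ξ) = -G β α ξ) {v : ι → E → E}
    (hv : ∀ α x, v α x = g α x + ∑ β, ∫ y, G α β (x - y) ∂μ β) :
    ∑ α, (∫ x, ⟪g α x, v α x⟫ ∂μ α
        + (1 / 2) * ∑ β, ∫ p, ⟪G α β (p.1 - p.2), v α p.1 - v β p.2⟫ ∂(μ α).prod (μ β))
      = ∑ α, ∫ x, ‖v α x‖ ^ 2 ∂μ α := by
  have hvc : ∀ α, Continuous (v α) := fun α => by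
    rw [funext (hv α)]
    exact continuous_add_sum_integral_comp_sub hK hμK (hg α) (hG α)
  set P : ι → ι → ℝ := fun α β => ∫ p, ⟪G α β (p.1 - p.2), v α p.1⟫ ∂(μ α).prod (μ β)
  have hpair : ∀ α β,
      ∫ p, ⟪G α β (p.1 - p.2), v α p.1 - v β p.2⟫ ∂(μ α).prod (μ β) = P α β + P β α := by
    intro α β
    have hint : ∀ {f : E × E → ℝ}, Continuous f → Integrable f ((μ α).prod (μ β)) :=
      fun hf => hf.integrable_of_measure_compl_eq_zero ((hK α).prod (hK β))
        (Measure.prod_compl_prod_eq_zero (hμK α) (hμK β))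
    have hswap : P β α = ∫ p, ⟪G β α (p.2 - p.1), v β p.2⟫ ∂(μ α).prod (μ β) :=
      (integral_prod_swap (fun p : E × E => ⟪G β α (p.1 - p.2), v β p.1⟫)).symm
    rw [hswap, ← integral_add (hint (by fun_prop)) (hint (by fun_prop))]
    congr 1 with p
    rw [← neg_sub p.1 p.2, hGodd, inner_sub_right, inner_neg_left, sub_eq_add_neg]
  have hself : ∀ α, ∫ x, ⟪g α x, v α x⟫ ∂μ α + ∑ β, P α β = ∫ x, ‖v α x‖ ^ 2 ∂μ α := by
    intro α
    have hint : ∀ {f : E → ℝ}, Continuous f → Integrable f (μ α) :=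
      fun hf => hf.integrable_of_measure_compl_eq_zero (hK α) (hμK α)
    have hconv : ∀ β, Continuous fun x => ⟪∫ y, G α β (x - y) ∂μ β, v α x⟫ := fun β =>
      (continuous_integral_of_measure_compl_eq_zero (H := fun x y => G α β (x - y))
        (by fun_prop) (hK β) (hμK β)).inner (hvc α)
    simp only [P, fun β => integral_prod_inner_eq_integral_inner_integral (hK α) (hμK α) (hK β)
      (hμK β) (H := fun x y => G α β (x - y)) (by fun_prop) (hvc α)]
    rw [← integral_finsetSum _ fun β _ => hint (hconv β), ← integral_add (hint (by fun_prop))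
      (integrable_finsetSum _ fun β _ => hint (hconv β))]
    congr 1 with x
    rw [← sum_inner, ← inner_add_left, ← hv, real_inner_self_eq_norm_sq]
  calc _ = ∑ α, (∫ x, ⟪g α x, v α x⟫ ∂μ α + ∑ β, P α β) := by
        simp only [hpair, Finset.sum_add_distrib]
        rw [← Finset.mul_sum, Finset.sum_add_distrib, Finset.sum_comm (f := fun α β => P β α)]
        ring
    _ = _ := Finset.sum_congr rfl fun α _ => hself α

theorem sum_integral_map_eq_sum_integral_prod {μ : ι → Measure E} [∀ α, IsFiniteMeasure (μ α)]
    {K : ι → Set E} (hK : ∀ α, IsCompact (K α)) (hμK : ∀ α, μ α (K α)ᶜ = 0) {V : ι → E → ℝ}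
    {W : ι → ι → E → ℝ} (hV : ∀ α, Continuous (V α)) (hW : ∀ α β, Continuous (W α β))
    {v : ι → E → E} (hvc : ∀ α, Continuous (v α)) (t : ℝ) :
    ∑ α, ∫ x, (V α x + (1 / 2) * ∑ β, ∫ y, W α β (x - y) ∂(μ β).map (fun y => y + t • v β y))
        ∂(μ α).map (fun x => x + t • v α x)
      = ∑ α, (∫ x, V α (x + t • v α x) ∂μ α
        + (1 / 2) * ∑ β, ∫ p, W α β (p.1 - p.2 + t • (v α p.1 - v β p.2)) ∂(μ α).prod (μ β)) := by
  refine Finset.sum_congr rfl fun α _ => ?_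
  have hpull : ∀ β x, ∫ y, W α β (x - y) ∂(μ β).map (fun y => y + t • v β y)
      = ∫ y, W α β (x - (y + t • v β y)) ∂μ β := fun β x =>
    integral_map (by fun_prop) (Continuous.aestronglyMeasurable (by fun_prop))
  have hconv : ∀ β, Continuous fun x => ∫ y, W α β (x - (y + t • v β y)) ∂μ β := fun β =>
    continuous_integral_of_measure_compl_eq_zero (H := fun x y => W α β (x - (y + t • v β y)))
      (by fun_prop) (hK β) (hμK β)
  have hint : ∀ {f : E → ℝ}, Continuous f → Integrable f (μ α) :=
    fun hf => hf.integrable_of_measure_compl_eq_zero (hK α) (hμK α)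
  have hsum : Continuous fun x => ∑ β, ∫ y, W α β (x - (y + t • v β y)) ∂μ β :=
    continuous_finsetSum _ fun β _ => hconv β
  have hconv' : ∀ β, Continuous fun x => ∫ y, W α β (x + t • v α x - (y + t • v β y)) ∂μ β :=
    fun β => (hconv β).comp (by fun_prop : Continuous fun x => x + t • v α x)
  simp only [hpull]
  rw [integral_map (by fun_prop) (Continuous.aestronglyMeasurable (by fun_prop)),
    integral_add (hint (by fun_prop)) (hint (by fun_prop)), integral_const_mul,
    integral_finsetSum _ fun β _ => hint (hconv' β)]
  congr 2
  refine Finset.sum_congr rfl fun β _ => ?_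
  have hI : Integrable (fun p : E × E => W α β (p.1 + t • v α p.1 - (p.2 + t • v β p.2)))
      ((μ α).prod (μ β)) :=
    Continuous.integrable_of_measure_compl_eq_zero (by fun_prop) ((hK α).prod (hK β))
      (Measure.prod_compl_prod_eq_zero (hμK α) (hμK β))
  rw [← integral_prod _ hI]
  congr 1 with p
  rw [smul_sub, add_sub_add_comm]

end Crowd

theorem discrete_time_entropy_inequality_multicomponent_general {d ν : ℕ}
    (μ : Fin ν → Measure (EuclideanSpace ℝ (Fin d)))
    (hfin : ∀ α, IsFiniteMeasure (μ α))
    (K : Fin ν → Set (EuclideanSpace ℝ (Fin d)))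
    (hK : ∀ α, IsCompact (K α)) (hμK : ∀ α, μ α (K α)ᶜ = 0)
    (V : Fin ν → EuclideanSpace ℝ (Fin d) → ℝ)
    (W : Fin ν → Fin ν → EuclideanSpace ℝ (Fin d) → ℝ)
    (hV : ∀ α, ContDiff ℝ 2 (V α)) (hW : ∀ α β, ContDiff ℝ 2 (W α β))
    (hWeven : ∀ α β ξ, W α β (-ξ) = W α β ξ)
    (hWsymm : ∀ α β, W α β = W β α)
    (v : Fin ν → EuclideanSpace ℝ (Fin d) → EuclideanSpace ℝ (Fin d))
    (hv : ∀ α x, v α x = gradient (V α) x +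
      ∑ β, ∫ y, gradient (W α β) (x - y) ∂(μ β))
    (χ : Fin ν → ℝ → EuclideanSpace ℝ (Fin d) → EuclideanSpace ℝ (Fin d))
    (hχ : ∀ α Δt x, χ α Δt x = x + Δt • v α x)
    (S : ℝ → ℝ)
    (hS : ∀ Δt, S Δt = ∑ α, ∫ x,
      (V α x + (1/2) * ∑ β, ∫ y, W α β (x - y) ∂(Measure.map (χ β Δt) (μ β)))
      ∂(Measure.map (χ α Δt) (μ α))) :
    (fun Δt => S Δt - S 0 - Δt * ∑ α, ∫ x, ‖v α x‖ ^ 2 ∂(μ α))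
      =O[𝓝[>] (0:ℝ)] fun Δt => Δt ^ 2 := by
  obtain rfl : χ = fun α t x => x + t • v α x := by funext α t x; exact hχ α t x
  have hgV : ∀ α, Continuous (gradient (V α)) := fun α =>
    ((hV α).of_le one_le_two).continuous_gradient
  have hgW : ∀ α β, Continuous (gradient (W α β)) := fun α β =>
    ((hW α β).of_le one_le_two).continuous_gradient
  have hvc : ∀ α, Continuous (v α) := fun α => by
    rw [funext (hv α)]
    exact continuous_add_sum_integral_comp_sub hK hμK (hgV α) (hgW α)
  have hfirst := sum_integral_inner_add_half_sum_integral_prod_eq_sum_integral_norm_sq hK hμK hgV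
    hgW (fun α β ξ => by rw [hWsymm α β, gradient_neg_of_even (hWeven β α)]) hv
  simp only [inner_gradient_left] at hfirst
  have hA := fun α => isBigO_integral_sub_sub_integral_fderiv (hK α) (hμK α) (hV α)
    (φ := fun x => x) continuous_id (hvc α)
  have hB := fun α β => isBigO_integral_sub_sub_integral_fderiv ((hK α).prod (hK β))
    (Measure.prod_compl_prod_eq_zero (hμK α) (hμK β)) (hW α β)
    (φ := fun p => p.1 - p.2) (w := fun p => v α p.1 - v β p.2) (by fun_prop) (by fun_prop)
  refine ((IsBigO.sum (s := Finset.univ) fun α _ => (hA α).add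
    ((IsBigO.sum (s := Finset.univ) fun β _ => hB α β).const_mul_left (1 / 2))).congr_left
      fun t => ?_).mono nhdsWithin_le_nhds
  simp only [hS, sum_integral_map_eq_sum_integral_prod hK hμK (fun α => (hV α).continuous)
    (fun α β => (hW α β).continuous) hvc]
  simp only [← hfirst, zero_smul, add_zero, smul_eq_mul, Finset.sum_apply]
  rw [Finset.mul_sum, ← Finset.sum_sub_distrib, ← Finset.sum_sub_distrib]
  refine Finset.sum_congr rfl fun α _ => ?_
  simp only [Finset.sum_sub_distrib, ← Finset.mul_sum]
  ring

/-- **Theorem 4.32 (discrete-in-time entropy inequality, multi-component crowd).**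
Finite, compactly supported, nonnegative measures `μ^α` on `ℝ^d` (absolutely continuous
with bounded densities), `C²` potentials `V^α` and `W^α_β` with bounded first and second
derivatives, `W^α_β` even and symmetric (`W^α_β = W^β_α`), partial velocities
`v^α = ∇V^α + Σ_β ∇W^α_β ⋆ μ^β`, motion mappings `χ^α_Δt(x) = x + Δt·v^α(x)`,
pushforwards `μ^α_Δt = χ^α_Δt#μ^α`, and entropy
`S(Δt) = Σ_α ∫ (V^α + ½ Σ_β W^α_β ⋆ μ^β_Δt) dμ^α_Δt`.  Then
`S(Δt) = S(0) + Δt Σ_α ∫ |v^α|² dμ^α + O(Δt²)` as `Δt → 0⁺`; in particular, up to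
`O(Δt²)`-terms, `S(Δt) ≥ S(0)`. -/
theorem discrete_time_entropy_inequality_multicomponent {d ν : ℕ}
    (μ : Fin ν → Measure (EuclideanSpace ℝ (Fin d)))
    (hfin : ∀ α, IsFiniteMeasure (μ α))
    (K : Fin ν → Set (EuclideanSpace ℝ (Fin d)))
    (hK : ∀ α, IsCompact (K α)) (hμK : ∀ α, μ α (K α)ᶜ = 0)
    (hac : ∀ α, μ α ≪ volume)
    (hbd : ∀ α, ∃ C : ℝ≥0∞, C ≠ ⊤ ∧ ∀ s, μ α s ≤ C * volume s)
    (V : Fin ν → EuclideanSpace ℝ (Fin d) → ℝ)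
    (W : Fin ν → Fin ν → EuclideanSpace ℝ (Fin d) → ℝ)
    (hV : ∀ α, ContDiff ℝ 2 (V α)) (hW : ∀ α β, ContDiff ℝ 2 (W α β))
    (hVbd : ∀ α, ∃ C : ℝ, ∀ x, ‖fderiv ℝ (V α) x‖ ≤ C ∧
      ‖fderiv ℝ (fderiv ℝ (V α)) x‖ ≤ C)
    (hWbd : ∀ α β, ∃ C : ℝ, ∀ x, ‖fderiv ℝ (W α β) x‖ ≤ C ∧
      ‖fderiv ℝ (fderiv ℝ (W α β)) x‖ ≤ C)
    (hWeven : ∀ α β ξ, W α β (-ξ) = W α β ξ)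
    (hWsymm : ∀ α β, W α β = W β α)
    (v : Fin ν → EuclideanSpace ℝ (Fin d) → EuclideanSpace ℝ (Fin d))
    (hv : ∀ α x, v α x = gradient (V α) x +
      ∑ β, ∫ y, gradient (W α β) (x - y) ∂(μ β))
    (χ : Fin ν → ℝ → EuclideanSpace ℝ (Fin d) → EuclideanSpace ℝ (Fin d))
    (hχ : ∀ α Δt x, χ α Δt x = x + Δt • v α x)
    (S : ℝ → ℝ)
    (hS : ∀ Δt, S Δt = ∑ α, ∫ x,
      (V α x + (1/2) * ∑ β, ∫ y, W α β (x - y) ∂(Measure.map (χ β Δt) (μ β)))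
      ∂(Measure.map (χ α Δt) (μ α))) :
    (fun Δt => S Δt - S 0 - Δt * ∑ α, ∫ x, ‖v α x‖ ^ 2 ∂(μ α))
      =O[𝓝[>] (0:ℝ)] fun Δt => Δt ^ 2 :=
  discrete_time_entropy_inequality_multicomponent_general μ hfin K hK hμK V W hV hW hWeven hWsymm v
    hv χ hχ S hS
end
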